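/- arXiv:1606.04775 — 2 statements merged into one kernel-verified Lean document; each statement's English description precedes it below -/
import Mathlib

section
/- Let B be a braided-commutative ℤⁿ-graded K-algebra and κ : C → B a graded algebra morphism, and let s ∈ C be homogeneous of degree 0. Then there is an isomorphism of graded algebras B ⊔_C C[s⁻¹] ≅ B[κ(s)⁻¹], where the pushout is taken along κ and the localization map ℓ_s : C → C[s⁻¹]. -/
open scoped TensorProduct
open TensorProduct

noncomputable section

universe u v w

/-- A bicharacter on `ℤⁿ` with values in `Kˣ`. -/
def IsBicharacter {n : ℕ} {K : Type*} [Field K]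
    (R : (Fin n → ℤ) → (Fin n → ℤ) → Kˣ) : Prop :=
  (∀ m m' p, R (m + m') p = R m p * R m' p) ∧
  (∀ m p p', R m (p + p') = R m p * R m p')

/-- A skew-symmetric bicharacter: `R(m,p) R(p,m) = 1`. -/
def IsSkewBicharacter {n : ℕ} {K : Type*} [Field K]
    (R : (Fin n → ℤ) → (Fin n → ℤ) → Kˣ) : Prop :=
  IsBicharacter R ∧ ∀ m p, R m p * R p m = 1

/-- Braided commutativity of a `ℤⁿ`-graded algebra:
`a·a' = R(deg a', deg a) a'·a` for homogeneous elements. -/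
def BraidedComm {n : ℕ} {K : Type*} [Field K] (R : (Fin n → ℤ) → (Fin n → ℤ) → Kˣ)
    {A : Type*} [Ring A] [Algebra K A] (𝒜 : (Fin n → ℤ) → Submodule K A) : Prop :=
  ∀ p q, ∀ a ∈ 𝒜 p, ∀ b ∈ 𝒜 q, a * b = ((R q p : Kˣ) : K) • (b * a)

/-- A degree-preserving (graded) map. -/
def IsGradedMap {n : ℕ} {K : Type*} [Field K] {A B : Type*}
    [AddCommMonoid A] [Module K A] [AddCommMonoid B] [Module K B]
    (𝒜 : (Fin n → ℤ) → Submodule K A) (ℬ : (Fin n → ℤ) → Submodule K B)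
    (f : A → B) : Prop :=
  ∀ p, ∀ a ∈ 𝒜 p, f a ∈ ℬ p

/-- The grading on a tensor product: `(A ⊗ B)^p = ⨆_q A^q ⊗ B^(p-q)`. -/
def tensorGrade {n : ℕ} {K : Type*} [Field K] {A B : Type*}
    [AddCommGroup A] [Module K A] [AddCommGroup B] [Module K B]
    (𝒜 : (Fin n → ℤ) → Submodule K A) (ℬ : (Fin n → ℤ) → Submodule K B)
    (p : Fin n → ℤ) : Submodule K (A ⊗[K] B) :=
  ⨆ q, LinearMap.range (TensorProduct.map (𝒜 q).subtype (ℬ (p - q)).subtype)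

/-- The grading on `K[x]` with `x` of degree `0`: everything sits in degree zero. -/
def unitGrade {n : ℕ} (K : Type*) [Field K] (p : Fin n → ℤ) : Submodule K (Polynomial K) :=
  if p = 0 then ⊤ else ⊥

/-- The grading on the dual numbers `K[x]/(x²)` with `x` of degree `0`. -/
def dualGrade {n : ℕ} (K : Type*) [Field K] (p : Fin n → ℤ) : Submodule K (DualNumber K) :=
  if p = 0 then ⊤ else ⊥

/-- The grading on `K[x]` with `x` of degree `m`: the degree `p` part is spanned by
those `x^k` with `k • m = p`. -/
def polyGradeGen {n : ℕ} (K : Type*) [Field K] (m : Fin n → ℤ) (p : Fin n → ℤ) :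
    Submodule K (Polynomial K) :=
  Submodule.span K {f : Polynomial K | ∃ k : ℕ, k • m = p ∧ f = Polynomial.X ^ k}

/-- The relation defining the localization `A[s⁻¹] = (A ⊗ K[x])/(s ⊗ x - 1)`. -/
def locRel (K : Type*) [Field K] {A : Type*} [Ring A] [Algebra K A] (s : A) :
    A ⊗[K] Polynomial K → A ⊗[K] Polynomial K → Prop :=
  fun u v => u = s ⊗ₜ Polynomial.X ∧ v = 1

/-- The localization `A[s⁻¹] := (A ⊗ K[x])/(s ⊗ x − 1)`. -/
abbrev Loc (K : Type*) [Field K] (A : Type*) [Ring A] [Algebra K A] (s : A) : Type _ :=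
  RingQuot (locRel K s)

/-- The canonical morphism `ℓ_s : A → A[s⁻¹]`, `a ↦ [a ⊗ 1]`. -/
noncomputable def locHom (K : Type*) [Field K] {A : Type*} [Ring A] [Algebra K A] (s : A) :
    A →ₐ[K] Loc K A s :=
  (RingQuot.mkAlgHom K (locRel K s)).comp Algebra.TensorProduct.includeLeft

/-- The inverse `[1 ⊗ x]` of `ℓ_s(s)` in `A[s⁻¹]`. -/
noncomputable def locInv (K : Type*) [Field K] {A : Type*} [Ring A] [Algebra K A] (s : A) :
    Loc K A s :=
  RingQuot.mkAlgHom K (locRel K s) (1 ⊗ₜ Polynomial.X)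

/-- The induced grading on the localization `A[s⁻¹]`. -/
noncomputable def locGrade {n : ℕ} (K : Type*) [Field K] {A : Type*} [Ring A] [Algebra K A]
    (𝒜 : (Fin n → ℤ) → Submodule K A) (s : A) (p : Fin n → ℤ) : Submodule K (Loc K A s) :=
  (tensorGrade 𝒜 (unitGrade K) p).map (RingQuot.mkAlgHom K (locRel K s)).toLinearMap

/-- A realization `T` of the braided tensor product algebra `A ⊔ B`:
a linear isomorphism `e : A ⊗ B ≃ T` carrying unit `1 ⊗ 1`, the braided product
`e(a⊗b) e(a'⊗b') = R(deg a', deg b) e((aa') ⊗ (bb'))` and the tensor product grading. -/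
structure BraidedTensor {n : ℕ} {K : Type*} [Field K]
    (R : (Fin n → ℤ) → (Fin n → ℤ) → Kˣ)
    {A B T : Type*} [Ring A] [Algebra K A] [Ring B] [Algebra K B] [Ring T] [Algebra K T]
    (𝒜 : (Fin n → ℤ) → Submodule K A) (ℬ : (Fin n → ℤ) → Submodule K B)
    (𝒯 : (Fin n → ℤ) → Submodule K T) where
  e : A ⊗[K] B ≃ₗ[K] T
  one_def : e (1 ⊗ₜ 1) = 1
  mul_def : ∀ p q p' q', ∀ a ∈ 𝒜 p, ∀ b ∈ ℬ q, ∀ a' ∈ 𝒜 p', ∀ b' ∈ ℬ q',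
    e (a ⊗ₜ b) * e (a' ⊗ₜ b') = ((R p' q : Kˣ) : K) • e ((a * a') ⊗ₜ (b * b'))
  grade_def : ∀ p, (tensorGrade 𝒜 ℬ p).map e.toLinearMap = 𝒯 p

/-- The `B ⊔ A`-valued derivations `ᴴDer(A, B ⊔ A)` (here `T` realizes `B ⊔ A` via `e`):
degree-preserving linear maps satisfying the Leibniz rule along `a ↦ 1_B ⊗ a`. -/
def IsHDer {n : ℕ} {K : Type*} [Field K] {A B T : Type*}
    [Ring A] [Algebra K A] [Ring B] [Algebra K B] [Ring T] [Algebra K T]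
    (𝒜 : (Fin n → ℤ) → Submodule K A) (e : B ⊗[K] A ≃ₗ[K] T)
    (𝒯 : (Fin n → ℤ) → Submodule K T) (v : A →ₗ[K] T) : Prop :=
  (∀ p, ∀ a ∈ 𝒜 p, v a ∈ 𝒯 p) ∧
  ∀ a a' : A, v (a * a') = v a * e (1 ⊗ₜ a') + e (1 ⊗ₜ a) * v a'

/-- The composite `(μ_B ⊗ id_A) ∘ (id_B ⊗ v) ∘ w` entering the bracket of `ᴴDer(A, B ⊔ A)`. -/
noncomputable def hderMul {K : Type*} [Field K] {A B T : Type*}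
    [Ring A] [Algebra K A] [Ring B] [Algebra K B] [Ring T] [Algebra K T]
    (e : B ⊗[K] A ≃ₗ[K] T) (v w : A →ₗ[K] T) : A →ₗ[K] T :=
  LinearMap.mul' K T ∘ₗ
    TensorProduct.map (e.toLinearMap ∘ₗ (TensorProduct.mk K B A).flip 1) v ∘ₗ
    e.symm.toLinearMap ∘ₗ w

/-- The bracket `[v,w] = (μ_B ⊗ id_A)∘((id_B ⊗ v)∘w − (id_B ⊗ w)∘v)` on `ᴴDer(A, B ⊔ A)`. -/
noncomputable def hderBracket {K : Type*} [Field K] {A B T : Type*}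
    [Ring A] [Algebra K A] [Ring B] [Algebra K B] [Ring T] [Algebra K T]
    (e : B ⊗[K] A ≃ₗ[K] T) (v w : A →ₗ[K] T) : A →ₗ[K] T :=
  hderMul e v w - hderMul e w v

/-- The `B⁰`-action `(b·v)(a) = (b ⊗ 1_A) v(a)` on `ᴴDer(A, B ⊔ A)`. -/
noncomputable def hderSMul {K : Type*} [Field K] {A B T : Type*}
    [Ring A] [Algebra K A] [Ring B] [Algebra K B] [Ring T] [Algebra K T]
    (e : B ⊗[K] A ≃ₗ[K] T) (b : B) (v : A →ₗ[K] T) : A →ₗ[K] T :=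
  LinearMap.mulLeft K (e (b ⊗ₜ 1)) ∘ₗ v

/-- A braided derivation of homogeneous degree `d`:
`L(a a') = L(a) a' + R(deg a, d) a L(a')`. -/
def IsBraidedDer {n : ℕ} {K : Type*} [Field K] (R : (Fin n → ℤ) → (Fin n → ℤ) → Kˣ)
    {A : Type*} [Ring A] [Algebra K A] (𝒜 : (Fin n → ℤ) → Submodule K A)
    (d : Fin n → ℤ) (L : A →ₗ[K] A) : Prop :=
  (∀ p, ∀ a ∈ 𝒜 p, L a ∈ 𝒜 (p + d)) ∧
  ∀ p, ∀ a ∈ 𝒜 p, ∀ a' : A, L (a * a') = L a * a' + ((R p d : Kˣ) : K) • (a * L a')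

/-!
The pushout is `B[κ(s)⁻¹]` because a morphism out of `C[s⁻¹]` is the same as a morphism out
of `C` together with an inverse of the image of `s`. Given `φ : B → D` and `ψ : C[s⁻¹] → D`
agreeing on `C`, the element `t = ψ(s⁻¹)` inverts `φ(κ s)`; it is homogeneous of degree `0`,
hence central in the braided-commutative algebra `D`, so `φ` and `t` define
`χ : B[κ(s)⁻¹] → D`. Every morphism out of a localization is determined by its values on the
algebra and on the inverse, which gives uniqueness.
-/

section Grading

variable {n : ℕ} {K : Type*} [Field K]

theorem tmul_mem_tensorGrade {A B : Type*}
    [AddCommGroup A] [Module K A] [AddCommGroup B] [Module K B]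
    {𝒜 : (Fin n → ℤ) → Submodule K A} {ℬ : (Fin n → ℤ) → Submodule K B}
    {p q : Fin n → ℤ} {a : A} {b : B} (ha : a ∈ 𝒜 q) (hb : b ∈ ℬ (p - q)) :
    a ⊗ₜ b ∈ tensorGrade 𝒜 ℬ p :=
  Submodule.mem_iSup_of_mem q ⟨(⟨a, ha⟩ : 𝒜 q) ⊗ₜ (⟨b, hb⟩ : ℬ (p - q)), rfl⟩

theorem tensorGrade_le {A B : Type*}
    [AddCommGroup A] [Module K A] [AddCommGroup B] [Module K B]
    {𝒜 : (Fin n → ℤ) → Submodule K A} {ℬ : (Fin n → ℤ) → Submodule K B}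
    {p : Fin n → ℤ} {N : Submodule K (A ⊗[K] B)}
    (h : ∀ q, ∀ a ∈ 𝒜 q, ∀ b ∈ ℬ (p - q), a ⊗ₜ b ∈ N) :
    tensorGrade 𝒜 ℬ p ≤ N := by
  refine iSup_le fun q => ?_
  rintro _ ⟨z, rfl⟩
  induction z with
  | zero => simp
  | tmul a b => exact h q a a.2 b b.2
  | add u v hu hv => rw [map_add]; exact N.add_mem hu hv

theorem IsBicharacter.apply_zero_left {R : (Fin n → ℤ) → (Fin n → ℤ) → Kˣ}
    (hR : IsBicharacter R) (p : Fin n → ℤ) : R 0 p = 1 := by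
  simpa using hR.1 0 0 p

theorem BraidedComm.commute_of_mem_zero {R : (Fin n → ℤ) → (Fin n → ℤ) → Kˣ}
    (hR : IsBicharacter R) {D : Type*} [Ring D] [Algebra K D]
    {𝒟 : (Fin n → ℤ) → Submodule K D} [DirectSum.Decomposition 𝒟]
    (hD : BraidedComm R 𝒟) {t : D} (ht : t ∈ 𝒟 0) (x : D) : Commute x t := by
  induction x using DirectSum.Decomposition.inductionOn 𝒟 with
  | zero => exact Commute.zero_left t
  | @homogeneous p x =>
    simpa [Commute, SemiconjBy, hR.apply_zero_left] using hD p 0 x x.2 t ht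
  | add x y hx hy => exact hx.add_left hy

end Grading

theorem aeval_mem_grade_zero {ι K D : Type*} [AddMonoid ι] [CommSemiring K] [Semiring D]
    [Algebra K D] (𝒟 : ι → Submodule K D) [SetLike.GradedMonoid 𝒟] {t : D} (ht : t ∈ 𝒟 0)
    (g : Polynomial K) : Polynomial.aeval t g ∈ 𝒟 0 :=
  Algebra.adjoin_singleton_le (S := SetLike.GradeZero.subalgebra 𝒟) ht
    (Polynomial.aeval_mem_adjoin_singleton K t)

section Localization

variable {K : Type*} [Field K] {A D : Type*} [Ring A] [Algebra K A] [Semiring D] [Algebra K D]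

theorem Loc.algHom_ext {s : A} {χ χ' : Loc K A s →ₐ[K] D}
    (hℓ : χ.comp (locHom K s) = χ'.comp (locHom K s)) (hinv : χ (locInv K s) = χ' (locInv K s)) :
    χ = χ' :=
  RingQuot.ringQuot_ext' _ _ _ (Algebra.TensorProduct.ext hℓ (Polynomial.algHom_ext hinv))

theorem locHom_mul_locInv (s : A) : locHom K s s * locInv K s = 1 := by
  rw [locHom, locInv, AlgHom.comp_apply, Algebra.TensorProduct.includeLeft_apply, ← map_mul,
    Algebra.TensorProduct.tmul_mul_tmul, mul_one, one_mul, RingQuot.mkAlgHom_rel K ⟨rfl, rfl⟩,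
    map_one]

theorem commute_locHom_locInv (s a : A) : Commute (locHom K s a) (locInv K s) := by
  rw [locHom, locInv, AlgHom.comp_apply, Algebra.TensorProduct.includeLeft_apply]
  refine Commute.map ?_ _
  simp [Commute, SemiconjBy]

theorem aeval_locInv (s : A) (g : Polynomial K) :
    Polynomial.aeval (locInv K s) g = RingQuot.mkAlgHom K (locRel K s) (1 ⊗ₜ g) := by
  rw [locInv, Polynomial.aeval_algHom_apply, ← Algebra.TensorProduct.includeRight_apply,
    Polynomial.aeval_algHom_apply, Polynomial.aeval_X_left_apply,
    Algebra.TensorProduct.includeRight_apply]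

theorem locHom_mul_aeval_locInv (s a : A) (g : Polynomial K) :
    locHom K s a * Polynomial.aeval (locInv K s) g = RingQuot.mkAlgHom K (locRel K s) (a ⊗ₜ g) := by
  rw [aeval_locInv, locHom, AlgHom.comp_apply, Algebra.TensorProduct.includeLeft_apply, ← map_mul,
    Algebra.TensorProduct.tmul_mul_tmul, mul_one, one_mul]

def locLift (s : A) (f : A →ₐ[K] D) (t : D) (hcomm : ∀ a, Commute (f a) t) (hinv : f s * t = 1) :
    Loc K A s →ₐ[K] D :=
  RingQuot.liftAlgHom K ⟨Algebra.TensorProduct.lift f (Polynomial.aeval t)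
      fun a g => Algebra.commute_of_mem_adjoin_singleton_of_commute
        (Polynomial.aeval_mem_adjoin_singleton K t) (hcomm a), by
    rintro _ _ ⟨rfl, rfl⟩
    simpa using hinv⟩

section LocLift

variable {s : A} {f : A →ₐ[K] D} {t : D} {hcomm : ∀ a, Commute (f a) t} {hinv : f s * t = 1}

theorem locLift_mk (a : A) (g : Polynomial K) :
    locLift s f t hcomm hinv (RingQuot.mkAlgHom K (locRel K s) (a ⊗ₜ g)) =
      f a * Polynomial.aeval t g := by
  simp [locLift]

theorem locLift_comp_locHom : (locLift s f t hcomm hinv).comp (locHom K s) = f := by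
  ext a
  exact (locLift_mk a 1).trans (by simp)

theorem locLift_locInv : locLift s f t hcomm hinv (locInv K s) = t :=
  (locLift_mk 1 Polynomial.X).trans (by simp)

end LocLift

end Localization

section LocalizationGrading

variable {n : ℕ} {K : Type*} [Field K] {A : Type*} [Ring A] [Algebra K A]
  {𝒜 : (Fin n → ℤ) → Submodule K A}

theorem mk_tmul_mem_locGrade {s : A} {p : Fin n → ℤ} {a : A} (ha : a ∈ 𝒜 p) (g : Polynomial K) :
    RingQuot.mkAlgHom K (locRel K s) (a ⊗ₜ g) ∈ locGrade K 𝒜 s p :=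
  Submodule.mem_map_of_mem (tmul_mem_tensorGrade (q := p) ha (by simp [unitGrade]))

theorem locInv_mem_locGrade_zero (𝒜 : (Fin n → ℤ) → Submodule K A) [SetLike.GradedOne 𝒜]
    (s : A) : locInv K s ∈ locGrade K 𝒜 s 0 :=
  mk_tmul_mem_locGrade (SetLike.one_mem_graded 𝒜) Polynomial.X

theorem isGradedMap_locGrade_of_mk_tmul {M : Type*} [AddCommMonoid M] [Module K M]
    {𝓜 : (Fin n → ℤ) → Submodule K M} {s : A} (χ : Loc K A s →ₗ[K] M)
    (h : ∀ p, ∀ a ∈ 𝒜 p, ∀ g, χ (RingQuot.mkAlgHom K (locRel K s) (a ⊗ₜ g)) ∈ 𝓜 p) :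
    IsGradedMap (locGrade K 𝒜 s) 𝓜 χ := by
  rintro p _ ⟨u, hu, rfl⟩
  refine tensorGrade_le (N := (𝓜 p).comap (χ ∘ₗ (RingQuot.mkAlgHom K (locRel K s)).toLinearMap))
    (fun q a ha g hg => ?_) hu
  by_cases hq : p - q = 0
  · obtain rfl := sub_eq_zero.mp hq
    exact h p a ha g
  · rw [unitGrade, if_neg hq, Submodule.mem_bot] at hg
    simp [hg]

theorem isGradedMap_locLift {D : Type*} [Semiring D] [Algebra K D]
    {𝒟 : (Fin n → ℤ) → Submodule K D} [SetLike.GradedMonoid 𝒟]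
    {s : A} {f : A →ₐ[K] D} {t : D} {hcomm : ∀ a, Commute (f a) t} {hinv : f s * t = 1}
    (hf : IsGradedMap 𝒜 𝒟 f) (ht : t ∈ 𝒟 0) :
    IsGradedMap (locGrade K 𝒜 s) 𝒟 (locLift s f t hcomm hinv) :=
  isGradedMap_locGrade_of_mk_tmul (locLift s f t hcomm hinv).toLinearMap fun p a ha g => by
    rw [AlgHom.toLinearMap_apply, locLift_mk]
    simpa using SetLike.mul_mem_graded (hf p a ha) (aeval_mem_grade_zero 𝒟 ht g)

end LocalizationGrading

section LocalizationMap

variable {n : ℕ} {K : Type*} [Field K] {B C : Type*} [Ring B] [Algebra K B] [Ring C] [Algebra K C]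

def locMap (κ : C →ₐ[K] B) (s : C) : Loc K C s →ₐ[K] Loc K B (κ s) :=
  locLift s ((locHom K (κ s)).comp κ) (locInv K (κ s))
    (fun c => commute_locHom_locInv (κ s) (κ c)) (locHom_mul_locInv (κ s))

variable (κ : C →ₐ[K] B) (s : C)

theorem locMap_mk (c : C) (g : Polynomial K) :
    locMap κ s (RingQuot.mkAlgHom K (locRel K s) (c ⊗ₜ g)) =
      RingQuot.mkAlgHom K (locRel K (κ s)) (κ c ⊗ₜ g) :=
  (locLift_mk c g).trans (locHom_mul_aeval_locInv (κ s) (κ c) g)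

theorem locMap_comp_locHom : (locMap κ s).comp (locHom K s) = (locHom K (κ s)).comp κ :=
  locLift_comp_locHom

theorem locMap_locInv : locMap κ s (locInv K s) = locInv K (κ s) :=
  locLift_locInv

theorem isGradedMap_locMap {𝒞 : (Fin n → ℤ) → Submodule K C} {ℬ : (Fin n → ℤ) → Submodule K B}
    (hκ : IsGradedMap 𝒞 ℬ κ) : IsGradedMap (locGrade K 𝒞 s) (locGrade K ℬ (κ s)) (locMap κ s) :=
  isGradedMap_locGrade_of_mk_tmul (locMap κ s).toLinearMap fun p c hc g => by
    rw [AlgHom.toLinearMap_apply, locMap_mk]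
    exact mk_tmul_mem_locGrade (hκ p c hc) g

end LocalizationMap

theorem stmt7_general {n : ℕ} {K : Type u} [Field K]
    (R : (Fin n → ℤ) → (Fin n → ℤ) → Kˣ) (hR : IsSkewBicharacter R)
    {B C : Type u} [Ring B] [Algebra K B] [Ring C] [Algebra K C]
    (ℬ : (Fin n → ℤ) → Submodule K B) (𝒞 : (Fin n → ℤ) → Submodule K C)
    [GradedAlgebra 𝒞]
    (κ : C →ₐ[K] B) (hκ : IsGradedMap 𝒞 ℬ κ)
    (s : C) :
    ∃ θ : Loc K C s →ₐ[K] Loc K B (κ s),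
      θ.comp (locHom K s) = (locHom K (κ s)).comp κ ∧
      θ (locInv K s) = locInv K (κ s) ∧
      IsGradedMap (locGrade K 𝒞 s) (locGrade K ℬ (κ s)) θ ∧
      (∀ (D : Type w) [Ring D] [Algebra K D]
        (𝒟 : (Fin n → ℤ) → Submodule K D) [GradedAlgebra 𝒟],
        BraidedComm R 𝒟 →
        ∀ (φ : B →ₐ[K] D) (ψ : Loc K C s →ₐ[K] D),
          IsGradedMap ℬ 𝒟 φ → IsGradedMap (locGrade K 𝒞 s) 𝒟 ψ →
          ψ.comp (locHom K s) = φ.comp κ →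
          ∃! χ : Loc K B (κ s) →ₐ[K] D,
            IsGradedMap (locGrade K ℬ (κ s)) 𝒟 χ ∧
            χ.comp (locHom K (κ s)) = φ ∧ χ.comp θ = ψ) := by
  refine ⟨locMap κ s, locMap_comp_locHom κ s, locMap_locInv κ s, isGradedMap_locMap κ s hκ, ?_⟩
  intro D _ _ 𝒟 _ hD φ ψ hφ hψ hψφ
  set t := ψ (locInv K s)
  have ht : t ∈ 𝒟 0 := hψ 0 _ (locInv_mem_locGrade_zero 𝒞 s)
  have hcomm : ∀ b, Commute (φ b) t := fun b => hD.commute_of_mem_zero hR.1 ht (φ b)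
  have hinv : φ (κ s) * t = 1 := by
    rw [← AlgHom.comp_apply, ← hψφ, AlgHom.comp_apply, ← map_mul, locHom_mul_locInv, map_one]
  set χ := locLift (κ s) φ t hcomm hinv
  have hχθ : χ.comp (locMap κ s) = ψ := by
    refine Loc.algHom_ext ?_ ?_
    · rw [AlgHom.comp_assoc, locMap_comp_locHom, ← AlgHom.comp_assoc, locLift_comp_locHom, hψφ]
    · rw [AlgHom.comp_apply, locMap_locInv, locLift_locInv]
  refine ⟨χ, ⟨isGradedMap_locLift hφ ht, locLift_comp_locHom, hχθ⟩, ?_⟩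
  rintro χ' ⟨-, hχ'ℓ, hχ'θ⟩
  refine Loc.algHom_ext (by rw [hχ'ℓ, locLift_comp_locHom]) ?_
  rw [← locMap_locInv κ s, ← AlgHom.comp_apply, hχ'θ, ← AlgHom.comp_apply, hχθ]

/-- `B ⊔_C C[s⁻¹] ≅ B[κ(s)⁻¹]`, expressed by saying that `B[κ(s)⁻¹]` together
with `ℓ_{κ(s)}` and the canonical map `θ : C[s⁻¹] → B[κ(s)⁻¹]` is the pushout of
`B ← C → C[s⁻¹]` in the category of braided-commutative `ℤⁿ`-graded algebras. -/
theorem stmt7 {n : ℕ} {K : Type u} [Field K]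
    (R : (Fin n → ℤ) → (Fin n → ℤ) → Kˣ) (hR : IsSkewBicharacter R)
    {B C : Type u} [Ring B] [Algebra K B] [Ring C] [Algebra K C]
    (ℬ : (Fin n → ℤ) → Submodule K B) (𝒞 : (Fin n → ℤ) → Submodule K C)
    [GradedAlgebra ℬ] [GradedAlgebra 𝒞]
    (hB : BraidedComm R ℬ) (hC : BraidedComm R 𝒞)
    (κ : C →ₐ[K] B) (hκ : IsGradedMap 𝒞 ℬ κ)
    (s : C) (hs : s ∈ 𝒞 0) :
    ∃ θ : Loc K C s →ₐ[K] Loc K B (κ s),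
      θ.comp (locHom K s) = (locHom K (κ s)).comp κ ∧
      θ (locInv K s) = locInv K (κ s) ∧
      IsGradedMap (locGrade K 𝒞 s) (locGrade K ℬ (κ s)) θ ∧
      (∀ (D : Type w) [Ring D] [Algebra K D]
        (𝒟 : (Fin n → ℤ) → Submodule K D) [GradedAlgebra 𝒟],
        BraidedComm R 𝒟 →
        ∀ (φ : B →ₐ[K] D) (ψ : Loc K C s →ₐ[K] D),
          IsGradedMap ℬ 𝒟 φ → IsGradedMap (locGrade K 𝒞 s) 𝒟 ψ →
          ψ.comp (locHom K s) = φ.comp κ →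
          ∃! χ : Loc K B (κ s) →ₐ[K] D,
            IsGradedMap (locGrade K ℬ (κ s)) 𝒟 χ ∧
            χ.comp (locHom K (κ s)) = φ ∧ χ.comp θ = ψ) :=
  stmt7_general R hR ℬ 𝒞 κ hκ s
end
end

section
/- Let A, B be braided-commutative ℤⁿ-graded K-algebras. Define ᴴDer(A, B ⊔ A) to be the set of degree-preserving K-linear maps v : A → B ⊔ A satisfying v(a a') = v(a)(1_B ⊗ a') + (1_B ⊗ a)v(a') for all a, a' ∈ A. Then ᴴDer(A, B ⊔ A) is a module over the commutative ring B⁰ of degree-0 elements of B, with action (b·v)(a) := (b ⊗ 1_A)·v(a), and the bracket [v, w] := (μ_B ⊗ id_A) ∘ ((id_B ⊗ v) ∘ w − (id_B ⊗ w) ∘ v) is a well-defined B⁰-bilinear Lie bracket on ᴴDer(A, B ⊔ A): [v,w] again satisfies the Leibniz rule and degree-preservation, [v,w] = −[w,v], the Jacobi identity holds, and [b·v, w] = b·[v,w] = [v, b·w] for all b ∈ B⁰. -/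
open scoped TensorProduct
open TensorProduct

noncomputable section

universe u v w

/-!
Every `v ∈ ᴴDer(A, B ⊔ A)` extends `B`-linearly to `v̂ : b ⊗ a ↦ (b ⊗ 1) v(a)` on `T = B ⊔ A`,
and the bracket is `[v, w] = v̂ ∘ w - ŵ ∘ v`. Since `T` is again braided commutative
and `v` preserves degrees, `v̂` is a genuine derivation of `T`. Hence `(v̂ ∘ w)^ = v̂ ∘ ŵ`, so
`[v, w]^` is the commutator of `v̂` and `ŵ`; the Leibniz rule and the Jacobi identity follow
formally from this. Elements of degree `0` are central in `T`, which gives `B⁰`-bilinearity.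
-/

lemma IsBicharacter.apply_zero_right {n : ℕ} {K : Type*} [Field K]
    {R : (Fin n → ℤ) → (Fin n → ℤ) → Kˣ} (hR : IsBicharacter R) (m : Fin n → ℤ) : R m 0 = 1 := by
  simpa using hR.2 m 0 0

/-- Commuting `b ⊗ a` (degrees `x`, `y`) past `b' ⊗ a'` (degrees `x'`, `y'`) in `B ⊔ A`,
in `B` and in `A` produces these factors. -/
lemma IsSkewBicharacter.braiding_tmul {n : ℕ} {K : Type*} [Field K]
    {R : (Fin n → ℤ) → (Fin n → ℤ) → Kˣ} (hR : IsSkewBicharacter R) (x y x' y' : Fin n → ℤ) :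
    R (x' + y') (x + y) * R x y' * (R x x' * R y y') = R x' y := by
  rw [hR.1.1, hR.1.2, hR.1.2]
  calc _ = R x' y * (R x' x * R x x') * (R y' x * R x y') * (R y' y * R y y') := by ac_rfl
    _ = R x' y := by rw [hR.2, hR.2, hR.2, mul_one, mul_one, mul_one]

namespace BraidedTensor

variable {n : ℕ} {K : Type*} [Field K] {R : (Fin n → ℤ) → (Fin n → ℤ) → Kˣ}
  {A B T : Type*} [Ring A] [Algebra K A] [Ring B] [Algebra K B] [Ring T] [Algebra K T]
  {𝒜 : (Fin n → ℤ) → Submodule K A} {ℬ : (Fin n → ℤ) → Submodule K B}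
  {𝒯 : (Fin n → ℤ) → Submodule K T}

lemma tmul_mem (bt : BraidedTensor R ℬ 𝒜 𝒯) {p q : Fin n → ℤ} {b : B} {a : A}
    (hb : b ∈ ℬ p) (ha : a ∈ 𝒜 q) :
    bt.e (b ⊗ₜ a) ∈ 𝒯 (p + q) := by
  rw [← bt.grade_def]
  refine Submodule.mem_map_of_mem (Submodule.mem_iSup_of_mem p ⟨⟨b, hb⟩ ⊗ₜ ⟨a, ?_⟩, rfl⟩)
  simpa using ha

@[elab_as_elim]
lemma grade_induction (bt : BraidedTensor R ℬ 𝒜 𝒯) {p : Fin n → ℤ} {P : T → Prop} (zero : P 0)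
    (add : ∀ x y, P x → P y → P (x + y)) (smul : ∀ (c : K) x, P x → P (c • x))
    (tmul : ∀ q, ∀ b ∈ ℬ q, ∀ a ∈ 𝒜 (p - q), P (bt.e (b ⊗ₜ a))) {t : T} (ht : t ∈ 𝒯 p) :
    P t := by
  let S : Submodule K T :=
    { carrier := {x | P x}
      add_mem' := add _ _
      zero_mem' := zero
      smul_mem' := smul }
  suffices h : 𝒯 p ≤ S from h ht
  rw [← bt.grade_def, Submodule.map_le_iff_le_comap]
  refine iSup_le fun q => ?_
  rintro _ ⟨y, rfl⟩
  induction y using TensorProduct.induction_on with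
  | zero => simp
  | tmul b a => exact tmul q b.1 b.2 a.1 a.2
  | add x y hx hy => rw [Submodule.mem_comap, map_add, map_add]; exact add _ _ hx hy

lemma mul_mem [SetLike.GradedMul 𝒜] [SetLike.GradedMul ℬ] (bt : BraidedTensor R ℬ 𝒜 𝒯)
    {p q : Fin n → ℤ} {t s : T}
    (ht : t ∈ 𝒯 p) (hs : s ∈ 𝒯 q) : t * s ∈ 𝒯 (p + q) := by
  refine bt.grade_induction (t := t) ?zero ?add ?smul ?tmul ht
  case zero => simp
  case add => intro x y hx hy; rw [add_mul]; exact add_mem hx hy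
  case smul => intro c x hx; rw [smul_mul_assoc]; exact Submodule.smul_mem _ c hx
  case tmul =>
    intro r b hb a ha
    refine bt.grade_induction (t := s) ?_ ?_ ?_ ?_ hs
    · simp
    · intro x y hx hy; rw [mul_add]; exact add_mem hx hy
    · intro c x hx; rw [mul_smul_comm]; exact Submodule.smul_mem _ c hx
    · intro r' b' hb' a' ha'
      rw [bt.mul_def _ _ _ _ b hb a ha b' hb' a' ha']
      refine Submodule.smul_mem _ _ ?_
      convert bt.tmul_mem (SetLike.mul_mem_graded hb hb') (SetLike.mul_mem_graded ha ha') using 2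
      abel

theorem braidedComm (hR : IsSkewBicharacter R) (hA : BraidedComm R 𝒜) (hB : BraidedComm R ℬ)
    (bt : BraidedTensor R ℬ 𝒜 𝒯) : BraidedComm R 𝒯 := by
  intro p q t ht s hs
  refine bt.grade_induction (t := t) ?zero ?add ?smul ?tmul ht
  case zero => simp
  case add => intro x y hx hy; rw [add_mul, mul_add, hx, hy, smul_add]
  case smul => intro c x hx; rw [smul_mul_assoc, hx, mul_smul_comm, smul_comm]
  case tmul =>
    intro r b hb a ha
    refine bt.grade_induction (t := s) ?_ ?_ ?_ ?_ hs
    · simp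
    · intro x y hx hy; rw [mul_add, add_mul, hx, hy, smul_add]
    · intro c x hx; rw [mul_smul_comm, hx, smul_mul_assoc, smul_comm]
    · intro r' b' hb' a' ha'
      rw [bt.mul_def _ _ _ _ b hb a ha b' hb' a' ha', bt.mul_def _ _ _ _ b' hb' a' ha' b hb a ha,
        hB _ _ b' hb' b hb, hA _ _ a' ha' a ha, TensorProduct.smul_tmul_smul, map_smul,
        smul_smul, smul_smul]
      congr 1
      have := hR.braiding_tmul r (p - r) r' (q - r')
      simp only [add_sub_cancel] at this
      exact_mod_cast this.symm

@[elab_as_elim]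
lemma induction_on [DirectSum.Decomposition 𝒜] [DirectSum.Decomposition ℬ]
    (bt : BraidedTensor R ℬ 𝒜 𝒯) {P : T → Prop} (zero : P 0)
    (add : ∀ x y, P x → P y → P (x + y))
    (tmul : ∀ p q, ∀ b ∈ ℬ p, ∀ a ∈ 𝒜 q, P (bt.e (b ⊗ₜ a))) (t : T) : P t := by
  obtain ⟨x, rfl⟩ := bt.e.surjective t
  induction x using TensorProduct.induction_on with
  | zero => simpa using zero
  | add x y hx hy => rw [map_add]; exact add _ _ hx hy
  | tmul b a =>
    induction b using DirectSum.Decomposition.inductionOn ℬ with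
    | zero => simpa using zero
    | add b b' hb hb' => rw [TensorProduct.add_tmul, map_add]; exact add _ _ hb hb'
    | homogeneous b =>
      induction a using DirectSum.Decomposition.inductionOn 𝒜 with
      | zero => simpa using zero
      | add a a' ha ha' => rw [TensorProduct.tmul_add, map_add]; exact add _ _ ha ha'
      | homogeneous a => exact tmul _ _ _ b.2 _ a.2

lemma commute_of_mem_zero [DirectSum.Decomposition 𝒜] [DirectSum.Decomposition ℬ]
    (hR : IsSkewBicharacter R) (hA : BraidedComm R 𝒜) (hB : BraidedComm R ℬ)
    (bt : BraidedTensor R ℬ 𝒜 𝒯) {β : T} (hβ : β ∈ 𝒯 0) (t : T) : Commute β t := by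
  refine bt.induction_on (t := t) (Commute.zero_right β) (fun _ _ => Commute.add_right) ?_
  intro p q b hb a ha
  rw [Commute, SemiconjBy, bt.braidedComm hR hA hB _ _ β hβ _ (bt.tmul_mem hb ha),
    hR.1.apply_zero_right, Units.val_one, one_smul]

lemma tmul_one_mem_zero [SetLike.GradedOne 𝒜] (bt : BraidedTensor R ℬ 𝒜 𝒯) {b : B}
    (hb : b ∈ ℬ 0) : bt.e (b ⊗ₜ 1) ∈ 𝒯 0 := by
  simpa using bt.tmul_mem hb (SetLike.one_mem_graded 𝒜)

lemma tmul_one_mul_tmul_one [SetLike.GradedOne 𝒜] (hR : IsBicharacter R)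
    (bt : BraidedTensor R ℬ 𝒜 𝒯) {p p' : Fin n → ℤ} {b b' : B} (hb : b ∈ ℬ p) (hb' : b' ∈ ℬ p') :
    bt.e (b ⊗ₜ 1) * bt.e (b' ⊗ₜ 1) = bt.e ((b * b') ⊗ₜ 1) := by
  have one_mem := SetLike.one_mem_graded 𝒜
  simpa [hR.apply_zero_right] using bt.mul_def _ _ _ _ b hb 1 one_mem b' hb' 1 one_mem

lemma tmul_one_mul_one_tmul [SetLike.GradedOne 𝒜] [SetLike.GradedOne ℬ] (hR : IsBicharacter R)
    (bt : BraidedTensor R ℬ 𝒜 𝒯) {p q : Fin n → ℤ} {b : B} {a : A} (hb : b ∈ ℬ p) (ha : a ∈ 𝒜 q) :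
    bt.e (b ⊗ₜ 1) * bt.e (1 ⊗ₜ a) = bt.e (b ⊗ₜ a) := by
  simpa [hR.apply_zero_right] using
    bt.mul_def _ _ _ _ b hb 1 (SetLike.one_mem_graded 𝒜) 1 (SetLike.one_mem_graded ℬ) a ha

end BraidedTensor

section HDer

variable {K : Type*} [Field K] {A B T : Type*}
  [Ring A] [Algebra K A] [Ring B] [Algebra K B] [Ring T] [Algebra K T]

/-- The extension `v̂ : e (b ⊗ a) ↦ e (b ⊗ 1) * v a` of `v` to `T`; by definition
`hderMul e v w = hderExt e v ∘ₗ w`. -/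
def hderExt (e : B ⊗[K] A ≃ₗ[K] T) (v : A →ₗ[K] T) : T →ₗ[K] T :=
  LinearMap.mul' K T ∘ₗ TensorProduct.map (e.toLinearMap ∘ₗ (TensorProduct.mk K B A).flip 1) v ∘ₗ
    e.symm.toLinearMap

lemma linearMap_ext_tmul (e : B ⊗[K] A ≃ₗ[K] T) {f g : T →ₗ[K] T}
    (h : ∀ b a, f (e (b ⊗ₜ a)) = g (e (b ⊗ₜ a))) : f = g :=
  (LinearEquiv.eq_comp_toLinearMap_iff f g).1 (TensorProduct.ext' h)

lemma hderBracket_eq (e : B ⊗[K] A ≃ₗ[K] T) (v w : A →ₗ[K] T) :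
    hderBracket e v w = hderExt e v ∘ₗ w - hderExt e w ∘ₗ v :=
  rfl

lemma hderExt_tmul (e : B ⊗[K] A ≃ₗ[K] T) (v : A →ₗ[K] T) (b : B) (a : A) :
    hderExt e v (e (b ⊗ₜ a)) = e (b ⊗ₜ 1) * v a := by
  simp [hderExt, LinearMap.mul'_apply]

lemma hderExt_sub (e : B ⊗[K] A ≃ₗ[K] T) (v w : A →ₗ[K] T) :
    hderExt e (v - w) = hderExt e v - hderExt e w :=
  linearMap_ext_tmul e fun b a => by simp [hderExt_tmul, mul_sub]

variable {n : ℕ} {R : (Fin n → ℤ) → (Fin n → ℤ) → Kˣ}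
  {𝒜 : (Fin n → ℤ) → Submodule K A} {ℬ : (Fin n → ℤ) → Submodule K B}
  {𝒯 : (Fin n → ℤ) → Submodule K T}

lemma IsHDer.map_one (bt : BraidedTensor R ℬ 𝒜 𝒯) {v : A →ₗ[K] T} (hv : IsHDer 𝒜 bt.e 𝒯 v) :
    v 1 = 0 := by
  simpa [bt.one_def] using hv.2 1 1

lemma hderExt_one_tmul (bt : BraidedTensor R ℬ 𝒜 𝒯) (v : A →ₗ[K] T) (a : A) :
    hderExt bt.e v (bt.e (1 ⊗ₜ a)) = v a := by
  rw [hderExt_tmul, bt.one_def, one_mul]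

lemma hderExt_mem [GradedAlgebra 𝒜] [GradedAlgebra ℬ] (bt : BraidedTensor R ℬ 𝒜 𝒯)
    {v : A →ₗ[K] T} (hv : ∀ p, ∀ a ∈ 𝒜 p, v a ∈ 𝒯 p) {p : Fin n → ℤ} {t : T} (ht : t ∈ 𝒯 p) :
    hderExt bt.e v t ∈ 𝒯 p := by
  refine bt.grade_induction (t := t) ?_ ?_ ?_ ?_ ht
  · simp
  · intro x y hx hy; rw [map_add]; exact add_mem hx hy
  · intro c x hx; rw [map_smul]; exact Submodule.smul_mem _ c hx
  · intro q b hb a ha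
    rw [hderExt_tmul]
    convert bt.mul_mem (bt.tmul_mem hb (SetLike.one_mem_graded 𝒜)) (hv _ a ha) using 2
    abel

lemma hderSMul_mul [SetLike.GradedOne 𝒜] (hR : IsBicharacter R) (bt : BraidedTensor R ℬ 𝒜 𝒯)
    {b b' : B} (hb : b ∈ ℬ 0) (hb' : b' ∈ ℬ 0) (v : A →ₗ[K] T) :
    hderSMul bt.e (b * b') v = hderSMul bt.e b (hderSMul bt.e b' v) := by
  ext a
  simp only [hderSMul, LinearMap.comp_apply, LinearMap.mulLeft_apply]
  rw [← bt.tmul_one_mul_tmul_one hR hb hb', mul_assoc]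

variable [GradedAlgebra 𝒜] [GradedAlgebra ℬ]

lemma hderExt_mul (hR : IsSkewBicharacter R) (hA : BraidedComm R 𝒜) (hB : BraidedComm R ℬ)
    (bt : BraidedTensor R ℬ 𝒜 𝒯) {v : A →ₗ[K] T} (hv : IsHDer 𝒜 bt.e 𝒯 v) (t s : T) :
    hderExt bt.e v (t * s) = hderExt bt.e v t * s + t * hderExt bt.e v s := by
  refine bt.induction_on (t := t) (by simp) ?_ ?_
  · intro x y hx hy; simp only [add_mul, map_add, hx, hy]; abel
  intro p q b hb a ha
  refine bt.induction_on (t := s) (by simp) ?_ ?_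
  · intro x y hx hy; simp only [mul_add, map_add, hx, hy]; abel
  intro p' q' b' hb' a' ha'
  have hbb' := SetLike.mul_mem_graded hb hb'
  have hcomm : v a * bt.e (b' ⊗ₜ 1) = ((R p' q : Kˣ) : K) • (bt.e (b' ⊗ₜ 1) * v a) := by
    simpa using bt.braidedComm hR hA hB _ _ _ (hv.1 q a ha) _
      (bt.tmul_mem hb' (SetLike.one_mem_graded 𝒜))
  have hmul : bt.e (b ⊗ₜ a) * bt.e (b' ⊗ₜ 1) = ((R p' q : Kˣ) : K) • bt.e ((b * b') ⊗ₜ a) := by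
    simpa using bt.mul_def _ _ _ _ b hb a ha b' hb' 1 (SetLike.one_mem_graded 𝒜)
  have h1 : bt.e (b ⊗ₜ 1) * v a * bt.e (b' ⊗ₜ a') =
      ((R p' q : Kˣ) : K) • (bt.e ((b * b') ⊗ₜ 1) * v a * bt.e (1 ⊗ₜ a')) := by
    rw [← bt.tmul_one_mul_one_tmul hR.1 hb' ha', ← mul_assoc, mul_assoc (bt.e (b ⊗ₜ 1)), hcomm,
      mul_smul_comm, smul_mul_assoc, ← mul_assoc, bt.tmul_one_mul_tmul_one hR.1 hb hb']
  have h2 : bt.e (b ⊗ₜ a) * (bt.e (b' ⊗ₜ 1) * v a') =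
      ((R p' q : Kˣ) : K) • (bt.e ((b * b') ⊗ₜ 1) * bt.e (1 ⊗ₜ a) * v a') := by
    rw [← mul_assoc, hmul, bt.tmul_one_mul_one_tmul hR.1 hbb' ha, smul_mul_assoc]
  rw [bt.mul_def _ _ _ _ b hb a ha b' hb' a' ha', map_smul, hderExt_tmul, hderExt_tmul,
    hderExt_tmul, hv.2, h1, h2, mul_add, smul_add, mul_assoc, mul_assoc]

lemma hderExt_tmul_one_mul (hR : IsSkewBicharacter R) (hA : BraidedComm R 𝒜)
    (hB : BraidedComm R ℬ) (bt : BraidedTensor R ℬ 𝒜 𝒯) {v : A →ₗ[K] T}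
    (hv : IsHDer 𝒜 bt.e 𝒯 v) (b : B) (t : T) :
    hderExt bt.e v (bt.e (b ⊗ₜ 1) * t) = bt.e (b ⊗ₜ 1) * hderExt bt.e v t := by
  rw [hderExt_mul hR hA hB bt hv, hderExt_tmul, hv.map_one bt, mul_zero, zero_mul, zero_add]

lemma hderExt_comp (hR : IsSkewBicharacter R) (hA : BraidedComm R 𝒜) (hB : BraidedComm R ℬ)
    (bt : BraidedTensor R ℬ 𝒜 𝒯) {v : A →ₗ[K] T} (hv : IsHDer 𝒜 bt.e 𝒯 v) (w : A →ₗ[K] T) :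
    hderExt bt.e (hderExt bt.e v ∘ₗ w) = hderExt bt.e v ∘ₗ hderExt bt.e w :=
  linearMap_ext_tmul bt.e fun b a => by
    simp only [LinearMap.comp_apply, hderExt_tmul, hderExt_tmul_one_mul hR hA hB bt hv]

lemma hderExt_hderSMul (hR : IsSkewBicharacter R) (hA : BraidedComm R 𝒜)
    (hB : BraidedComm R ℬ) (bt : BraidedTensor R ℬ 𝒜 𝒯) {b : B} (hb : b ∈ ℬ 0)
    (v : A →ₗ[K] T) :
    hderExt bt.e (hderSMul bt.e b v) = LinearMap.mulLeft K (bt.e (b ⊗ₜ 1)) ∘ₗ hderExt bt.e v :=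
  linearMap_ext_tmul bt.e fun b' a => by
    simp only [hderSMul, LinearMap.comp_apply, LinearMap.mulLeft_apply, hderExt_tmul]
    rw [← mul_assoc, ← mul_assoc,
      (bt.commute_of_mem_zero hR hA hB (bt.tmul_one_mem_zero hb) (bt.e (b' ⊗ₜ 1))).eq]

lemma isHDer_hderSMul (hR : IsSkewBicharacter R) (hA : BraidedComm R 𝒜) (hB : BraidedComm R ℬ)
    (bt : BraidedTensor R ℬ 𝒜 𝒯) {b : B} (hb : b ∈ ℬ 0) {v : A →ₗ[K] T}
    (hv : IsHDer 𝒜 bt.e 𝒯 v) : IsHDer 𝒜 bt.e 𝒯 (hderSMul bt.e b v) := by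
  have hβ := bt.commute_of_mem_zero hR hA hB (bt.tmul_one_mem_zero hb)
  refine ⟨fun p a ha => ?_, fun a a' => ?_⟩
  · simpa [hderSMul] using bt.mul_mem (bt.tmul_one_mem_zero hb) (hv.1 p a ha)
  · simp only [hderSMul, LinearMap.comp_apply, LinearMap.mulLeft_apply]
    rw [hv.2, mul_add, ← mul_assoc, ← mul_assoc, (hβ (bt.e (1 ⊗ₜ a))).eq,
      mul_assoc (bt.e (1 ⊗ₜ a))]

lemma isHDer_hderBracket (hR : IsSkewBicharacter R) (hA : BraidedComm R 𝒜)
    (hB : BraidedComm R ℬ) (bt : BraidedTensor R ℬ 𝒜 𝒯) {v w : A →ₗ[K] T}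
    (hv : IsHDer 𝒜 bt.e 𝒯 v) (hw : IsHDer 𝒜 bt.e 𝒯 w) :
    IsHDer 𝒜 bt.e 𝒯 (hderBracket bt.e v w) := by
  refine ⟨fun p a ha => ?_, fun a a' => ?_⟩
  · exact sub_mem (hderExt_mem bt hv.1 (hw.1 p a ha)) (hderExt_mem bt hw.1 (hv.1 p a ha))
  · simp only [hderBracket_eq, LinearMap.sub_apply, LinearMap.comp_apply, hv.2, hw.2, map_add,
      hderExt_mul hR hA hB bt hv, hderExt_mul hR hA hB bt hw, hderExt_one_tmul, sub_mul, mul_sub]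
    abel

lemma hderBracket_jacobi (hR : IsSkewBicharacter R) (hA : BraidedComm R 𝒜)
    (hB : BraidedComm R ℬ) (bt : BraidedTensor R ℬ 𝒜 𝒯) {u v w : A →ₗ[K] T}
    (hu : IsHDer 𝒜 bt.e 𝒯 u) (hv : IsHDer 𝒜 bt.e 𝒯 v) (hw : IsHDer 𝒜 bt.e 𝒯 w) :
    hderBracket bt.e u (hderBracket bt.e v w) =
      hderBracket bt.e (hderBracket bt.e u v) w + hderBracket bt.e v (hderBracket bt.e u w) := by
  have hExt : ∀ {x y : A →ₗ[K] T}, IsHDer 𝒜 bt.e 𝒯 x → IsHDer 𝒜 bt.e 𝒯 y →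
      hderExt bt.e (hderBracket bt.e x y) =
        hderExt bt.e x ∘ₗ hderExt bt.e y - hderExt bt.e y ∘ₗ hderExt bt.e x := fun hx hy => by
    rw [hderBracket_eq, hderExt_sub, hderExt_comp hR hA hB bt hx, hderExt_comp hR hA hB bt hy]
  rw [hderBracket_eq bt.e u (hderBracket bt.e v w), hderBracket_eq bt.e (hderBracket bt.e u v) w,
    hderBracket_eq bt.e v (hderBracket bt.e u w), hExt hv hw, hExt hu hv, hExt hu hw]
  simp only [hderBracket_eq, LinearMap.comp_sub, LinearMap.sub_comp, LinearMap.comp_assoc]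
  abel

lemma hderBracket_hderSMul_left (hR : IsSkewBicharacter R) (hA : BraidedComm R 𝒜)
    (hB : BraidedComm R ℬ) (bt : BraidedTensor R ℬ 𝒜 𝒯) {b : B} (hb : b ∈ ℬ 0)
    {v w : A →ₗ[K] T} (hw : IsHDer 𝒜 bt.e 𝒯 w) :
    hderBracket bt.e (hderSMul bt.e b v) w = hderSMul bt.e b (hderBracket bt.e v w) := by
  rw [hderBracket_eq, hderBracket_eq, hderExt_hderSMul hR hA hB bt hb]
  ext a
  simp only [hderSMul, LinearMap.sub_apply, LinearMap.comp_apply, LinearMap.mulLeft_apply,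
    hderExt_tmul_one_mul hR hA hB bt hw, mul_sub]

lemma hderBracket_hderSMul_right (hR : IsSkewBicharacter R) (hA : BraidedComm R 𝒜)
    (hB : BraidedComm R ℬ) (bt : BraidedTensor R ℬ 𝒜 𝒯) {b : B} (hb : b ∈ ℬ 0)
    {v w : A →ₗ[K] T} (hv : IsHDer 𝒜 bt.e 𝒯 v) :
    hderBracket bt.e v (hderSMul bt.e b w) = hderSMul bt.e b (hderBracket bt.e v w) := by
  rw [hderBracket_eq, hderBracket_eq, hderExt_hderSMul hR hA hB bt hb]
  ext a
  simp only [hderSMul, LinearMap.sub_apply, LinearMap.comp_apply, LinearMap.mulLeft_apply,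
    hderExt_tmul_one_mul hR hA hB bt hv, mul_sub]

end HDer

/-- `ᴴDer(A, B ⊔ A)` is a `B⁰`-module with action `(b·v)(a) = (b ⊗ 1) v(a)`,
and the bracket `[v,w] = (μ_B ⊗ id)∘((id ⊗ v)∘w − (id ⊗ w)∘v)` is a well-defined
`B⁰`-bilinear Lie bracket on it. Here `T` realizes `B ⊔ A` via `bt.e`. -/
theorem stmt13 {n : ℕ} {K : Type*} [Field K]
    (R : (Fin n → ℤ) → (Fin n → ℤ) → Kˣ) (hR : IsSkewBicharacter R)
    {A B T : Type*} [Ring A] [Algebra K A] [Ring B] [Algebra K B] [Ring T] [Algebra K T]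
    (𝒜 : (Fin n → ℤ) → Submodule K A) (ℬ : (Fin n → ℤ) → Submodule K B)
    (𝒯 : (Fin n → ℤ) → Submodule K T)
    [GradedAlgebra 𝒜] [GradedAlgebra ℬ]
    (hA : BraidedComm R 𝒜) (hB : BraidedComm R ℬ)
    (bt : BraidedTensor R ℬ 𝒜 𝒯) :
    -- the B⁰-action is well defined and a module action
    (∀ b ∈ ℬ 0, ∀ v, IsHDer 𝒜 bt.e 𝒯 v → IsHDer 𝒜 bt.e 𝒯 (hderSMul bt.e b v)) ∧
    (∀ v : A →ₗ[K] T, hderSMul bt.e (1 : B) v = v) ∧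
    (∀ b b' : B, ∀ v : A →ₗ[K] T,
      hderSMul bt.e (b + b') v = hderSMul bt.e b v + hderSMul bt.e b' v) ∧
    (∀ b ∈ ℬ 0, ∀ b' ∈ ℬ 0, ∀ v : A →ₗ[K] T,
      hderSMul bt.e (b * b') v = hderSMul bt.e b (hderSMul bt.e b' v)) ∧
    -- the bracket is well defined (Leibniz rule and degree preservation)
    (∀ v w, IsHDer 𝒜 bt.e 𝒯 v → IsHDer 𝒜 bt.e 𝒯 w →
      IsHDer 𝒜 bt.e 𝒯 (hderBracket bt.e v w)) ∧
    -- antisymmetry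
    (∀ v w : A →ₗ[K] T, hderBracket bt.e v w = - hderBracket bt.e w v) ∧
    -- Jacobi identity
    (∀ u v w, IsHDer 𝒜 bt.e 𝒯 u → IsHDer 𝒜 bt.e 𝒯 v → IsHDer 𝒜 bt.e 𝒯 w →
      hderBracket bt.e u (hderBracket bt.e v w) =
        hderBracket bt.e (hderBracket bt.e u v) w +
        hderBracket bt.e v (hderBracket bt.e u w)) ∧
    -- B⁰-bilinearity of the bracket
    (∀ b ∈ ℬ 0, ∀ v w, IsHDer 𝒜 bt.e 𝒯 v → IsHDer 𝒜 bt.e 𝒯 w →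
      hderBracket bt.e (hderSMul bt.e b v) w = hderSMul bt.e b (hderBracket bt.e v w) ∧
      hderBracket bt.e v (hderSMul bt.e b w) = hderSMul bt.e b (hderBracket bt.e v w)) := by
  refine ⟨fun b hb v hv => isHDer_hderSMul hR hA hB bt hb hv,
    fun v => LinearMap.ext fun a => by simp [hderSMul, bt.one_def],
    fun b b' v => LinearMap.ext fun a => by simp [hderSMul, TensorProduct.add_tmul, add_mul],
    fun b hb b' hb' v => hderSMul_mul hR.1 bt hb hb' v,
    fun v w hv hw => isHDer_hderBracket hR hA hB bt hv hw,
    fun v w => (neg_sub _ _).symm,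
    fun u v w hu hv hw => hderBracket_jacobi hR hA hB bt hu hv hw,
    fun b hb v w hv hw =>
      ⟨hderBracket_hderSMul_left hR hA hB bt hb hw, hderBracket_hderSMul_right hR hA hB bt hb hv⟩⟩
end
end
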